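/- arXiv:2510.11669 — 7 statements merged into one kernel-verified Lean document; each statement's English description precedes it below -/
import Mathlib

section
/- Let ã, b̃, C̃ ∈ ℝ with ã ≠ 0 and ã ≠ −1, let I ⊆ ℝ be a nonempty open interval, and let f : I → ℝ be twice differentiable with f''(u) ≠ 0 for all u ∈ I, satisfying √(1+f'(u)²)·((1+f'(u)²)/f''(u) − ã·f(u) − b̃) = C̃ for all u ∈ I. Then there exists a constant C̃₁ ∈ ℝ such that for all u ∈ I, f(u) = C̃₁·(1+f'(u)²)^{ã/2} − (C̃/(ã+1))·(1+f'(u)²)^{−1/2} − b̃/ã. -/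
open Real Set

/-- Lemma 3.1 (first-integral form), case ã ∉ {−1, 0}. -/
theorem stmt_0 (atil btil Ctil : ℝ) (ha0 : atil ≠ 0) (ha1 : atil ≠ -1)
    (a b : ℝ) (hab : a < b) (f : ℝ → ℝ)
    (hf1 : ∀ u ∈ Ioo a b, DifferentiableAt ℝ f u)
    (hf2 : ∀ u ∈ Ioo a b, DifferentiableAt ℝ (deriv f) u)
    (hf'' : ∀ u ∈ Ioo a b, deriv (deriv f) u ≠ 0)
    (heq : ∀ u ∈ Ioo a b,
      Real.sqrt (1 + (deriv f u) ^ 2) *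
        ((1 + (deriv f u) ^ 2) / deriv (deriv f) u - atil * f u - btil) = Ctil) :
    ∃ C₁ : ℝ, ∀ u ∈ Ioo a b,
      f u = C₁ * (1 + (deriv f u) ^ 2) ^ (atil / 2)
        - (Ctil / (atil + 1)) * (1 + (deriv f u) ^ 2) ^ (-(1 : ℝ) / 2)
        - btil / atil := by
  have ha1' : atil + 1 ≠ 0 := fun h => ha1 (by linarith)
  set Q : ℝ → ℝ := fun u => 1 + (deriv f u) ^ 2 with hQdef
  have hQpos : ∀ u, 0 < Q u := fun u => by positivity
  set g : ℝ → ℝ := fun u =>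
    (f u + btil / atil) * Q u ^ (-atil / 2)
      + (Ctil / (atil + 1)) * Q u ^ (-(atil + 1) / 2) with hgdef
  have hg0 : ∀ u ∈ Ioo a b, HasDerivAt g 0 u := by
    intro u hu
    have hQne : Q u ≠ 0 := (hQpos u).ne'
    have hF'' := hf'' u hu
    have hQ' : HasDerivAt Q (2 * deriv f u * deriv (deriv f) u) u := by
      have := ((hf2 u hu).hasDerivAt.pow 2).const_add (1 : ℝ)
      refine this.congr_deriv ?_
      norm_num
    have hp : HasDerivAt (fun u => Q u ^ (-atil / 2))
        (2 * deriv f u * deriv (deriv f) u * (-atil / 2) * Q u ^ (-atil / 2 - 1)) u :=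
      hQ'.rpow_const (Or.inl hQne)
    have hq : HasDerivAt (fun u => Q u ^ (-(atil + 1) / 2))
        (2 * deriv f u * deriv (deriv f) u * (-(atil + 1) / 2) * Q u ^ (-(atil + 1) / 2 - 1)) u :=
      hQ'.rpow_const (Or.inl hQne)
    have hg : HasDerivAt g
        (deriv f u * Q u ^ (-atil / 2)
          + (f u + btil / atil) * (2 * deriv f u * deriv (deriv f) u * (-atil / 2) * Q u ^ (-atil / 2 - 1))
          + (Ctil / (atil + 1)) * (2 * deriv f u * deriv (deriv f) u * (-(atil + 1) / 2) * Q u ^ (-(atil + 1) / 2 - 1))) u :=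
      (((hf1 u hu).hasDerivAt.add_const (btil / atil)).mul hp).add (hq.const_mul _)
    convert hg using 1
    -- show the derivative is 0
    have hsne : Real.sqrt (Q u) ≠ 0 := Real.sqrt_ne_zero'.2 (hQpos u)
    have hhalf : Q u ^ (-(1:ℝ)/2) = (Real.sqrt (Q u))⁻¹ := by
      rw [show (-(1:ℝ)/2) = -(1/2 : ℝ) by norm_num, Real.rpow_neg (hQpos u).le,
        Real.sqrt_eq_rpow]
    have h0 : Real.sqrt (Q u) * (Q u / deriv (deriv f) u - atil * f u - btil) = Ctil :=
      heq u hu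
    have hQeq : Q u = deriv (deriv f) u * (atil * f u + btil)
        + deriv (deriv f) u * Ctil * Q u ^ (-(1:ℝ)/2) := by
      rw [hhalf]
      field_simp [hF''] at h0
      field_simp
      linear_combination h0
    have e1 : Q u ^ (-atil/2) = Q u ^ (-atil/2 - 1) * Q u := by
      rw [← Real.rpow_add_one hQne]; ring_nf
    have e2 : Q u ^ (-atil/2 - 1) * Q u ^ (-(1:ℝ)/2) = Q u ^ (-(atil+1)/2 - 1) := by
      rw [← Real.rpow_add (hQpos u)]; ring_nf
    rw [e1]
    set Z := Q u ^ (-(1:ℝ)/2) with hZ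
    set X := Q u ^ (-atil/2 - 1) with hX
    set Y := Q u ^ (-(atil+1)/2 - 1) with hY
    rw [hQeq, ← e2]
    field_simp
    ring
  -- g is constant
  set u₀ : ℝ := (a + b) / 2 with hu₀def
  have hu₀ : u₀ ∈ Ioo a b := ⟨by simp [hu₀def]; linarith, by simp [hu₀def]; linarith⟩
  have hconst : ∀ u ∈ Ioo a b, g u = g u₀ := by
    intro u hu
    refine (convex_Ioo a b).is_const_of_fderivWithin_eq_zero
      (fun x hx => ((hg0 x hx).differentiableAt).differentiableWithinAt) ?_ hu hu₀
    intro x hx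
    rw [fderivWithin_of_isOpen isOpen_Ioo hx, (hg0 x hx).hasFDerivAt.fderiv]
    ext; simp
  refine ⟨g u₀, fun u hu => ?_⟩
  have h : (f u + btil / atil) * Q u ^ (-atil / 2)
      + (Ctil / (atil + 1)) * Q u ^ (-(atil + 1) / 2) = g u₀ := hconst u hu
  have i1 : Q u ^ (-atil/2) * Q u ^ (atil/2) = 1 := by
    rw [← Real.rpow_add (hQpos u), show -atil/2 + atil/2 = 0 by ring, Real.rpow_zero]
  have i2 : Q u ^ (-(atil+1)/2) * Q u ^ (atil/2) = Q u ^ (-(1:ℝ)/2) := by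
    rw [← Real.rpow_add (hQpos u)]; ring_nf
  show f u = g u₀ * Q u ^ (atil/2) - (Ctil/(atil+1)) * Q u ^ (-(1:ℝ)/2) - btil/atil
  linear_combination (Q u ^ (atil/2)) * h - (f u + btil/atil) * i1 - (Ctil/(atil+1)) * i2
end

section
/- Let b̃, C̃ ∈ ℝ, let I ⊆ ℝ be a nonempty open interval, and let f : I → ℝ be twice differentiable with f''(u) ≠ 0 for all u ∈ I, satisfying √(1+f'(u)²)·((1+f'(u)²)/f''(u) − b̃) = C̃ for all u ∈ I. Then there exists a constant C̃₁ ∈ ℝ such that for all u ∈ I, f(u) = C̃₁ − C̃·(1+f'(u)²)^{−1/2} + (b̃/2)·log(1+f'(u)²). -/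
open Real Set

/-!
With `p = f'` and `s = 1 + p²`, the equation solved for `C̃` gives `C̃ p f'' / s^{3/2} = p - b̃ p f'' / s`.
Hence the derivative `p - C̃ p f'' / s^{3/2} - b̃ p f'' / s` of
`f + C̃ s^{-1/2} - (b̃/2) log s` vanishes on the interval, so this function is constant there.
-/

lemma hasDerivAt_one_add_sq_rpow_neg_half {g : ℝ → ℝ} {g' x : ℝ} (hg : HasDerivAt g g' x) :
    HasDerivAt (fun y => (1 + g y ^ 2) ^ (-(1 : ℝ) / 2))
      (-(g x * g') / ((1 + g x ^ 2) * √(1 + g x ^ 2))) x := by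
  have hs : ∀ y, 0 < 1 + g y ^ 2 := fun y => by positivity
  have hfun : (fun y => (1 + g y ^ 2) ^ (-(1 : ℝ) / 2)) = fun y => (√(1 + g y ^ 2))⁻¹ := by
    funext y
    rw [neg_div, rpow_neg (hs y).le, sqrt_eq_rpow]
  have hsqrt := ((hg.fun_pow 2).const_add 1).sqrt (hs x).ne'
  rw [hfun]
  refine (hsqrt.inv (sqrt_pos.2 (hs x)).ne').congr_deriv ?_
  rw [sq_sqrt (hs x).le]
  field_simp
  ring

theorem hasDerivAt_first_integral {f f' : ℝ → ℝ} {b C q x : ℝ}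
    (hf : HasDerivAt f (f' x) x) (hf' : HasDerivAt f' q x) (hq : q ≠ 0)
    (h : √(1 + f' x ^ 2) * ((1 + f' x ^ 2) / q - b) = C) :
    HasDerivAt (fun y => f y + C * (1 + f' y ^ 2) ^ (-(1 : ℝ) / 2) - b / 2 * log (1 + f' y ^ 2))
      0 x := by
  have hs : 0 < 1 + f' x ^ 2 := by positivity
  have hlog := ((hf'.fun_pow 2).const_add 1).log hs.ne'
  refine ((hf.add ((hasDerivAt_one_add_sq_rpow_neg_half hf').const_mul C)).sub
    (hlog.const_mul (b / 2))).congr_deriv ?_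
  rw [← h]
  have : √(1 + f' x ^ 2) ≠ 0 := (sqrt_pos.2 hs).ne'
  field_simp
  ring

theorem stmt_1_general (btil Ctil : ℝ)
    (a b : ℝ) (f : ℝ → ℝ)
    (hf1 : ∀ u ∈ Ioo a b, DifferentiableAt ℝ f u)
    (hf2 : ∀ u ∈ Ioo a b, DifferentiableAt ℝ (deriv f) u)
    (hf'' : ∀ u ∈ Ioo a b, deriv (deriv f) u ≠ 0)
    (heq : ∀ u ∈ Ioo a b,
      Real.sqrt (1 + (deriv f u) ^ 2) *
        ((1 + (deriv f u) ^ 2) / deriv (deriv f) u - btil) = Ctil) :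
    ∃ C₁ : ℝ, ∀ u ∈ Ioo a b,
      f u = C₁ - Ctil * (1 + (deriv f u) ^ 2) ^ (-(1 : ℝ) / 2)
        + (btil / 2) * Real.log (1 + (deriv f u) ^ 2) := by
  have hderiv (u : ℝ) (hu : u ∈ Ioo a b) :=
    hasDerivAt_first_integral (hf1 u hu).hasDerivAt (hf2 u hu).hasDerivAt (hf'' u hu) (heq u hu)
  obtain ⟨C₁, hC₁⟩ := isOpen_Ioo.exists_is_const_of_deriv_eq_zero isPreconnected_Ioo
    (fun u hu => (hderiv u hu).differentiableAt.differentiableWithinAt)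
    (fun u hu => (hderiv u hu).deriv)
  refine ⟨C₁, fun u hu => ?_⟩
  linarith [hC₁ u hu]

/-- Lemma 3.1 (first-integral form), case ã = 0. -/
theorem stmt_1 (btil Ctil : ℝ)
    (a b : ℝ) (hab : a < b) (f : ℝ → ℝ)
    (hf1 : ∀ u ∈ Ioo a b, DifferentiableAt ℝ f u)
    (hf2 : ∀ u ∈ Ioo a b, DifferentiableAt ℝ (deriv f) u)
    (hf'' : ∀ u ∈ Ioo a b, deriv (deriv f) u ≠ 0)
    (heq : ∀ u ∈ Ioo a b,
      Real.sqrt (1 + (deriv f u) ^ 2) *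
        ((1 + (deriv f u) ^ 2) / deriv (deriv f) u - btil) = Ctil) :
    ∃ C₁ : ℝ, ∀ u ∈ Ioo a b,
      f u = C₁ - Ctil * (1 + (deriv f u) ^ 2) ^ (-(1 : ℝ) / 2)
        + (btil / 2) * Real.log (1 + (deriv f u) ^ 2) :=
  stmt_1_general btil Ctil a b f hf1 hf2 hf'' heq
end

section
/- Let b̃, C̃ ∈ ℝ, let I ⊆ ℝ be a nonempty open interval, and let f : I → ℝ be twice differentiable with f''(u) ≠ 0 for all u ∈ I, satisfying √(1+f'(u)²)·((1+f'(u)²)/f''(u) + f(u) − b̃) = C̃ for all u ∈ I. Then there exists a constant C̃₁ ∈ ℝ such that for all u ∈ I, f(u) = b̃ + (1+f'(u)²)^{−1/2}·(C̃₁ + (C̃/2)·log(1+f'(u)²)). -/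
open Real Set

/-! `u ↦ firstIntegral b̃ C̃ (f u) (f' u)` is a first integral of the equation: solving the
equation for `f - b̃` and substituting, its derivative vanishes identically. Hence it is constant
on the interval, and solving for `f` gives the claimed formula. -/

noncomputable def firstIntegral (b C y p : ℝ) : ℝ :=
  (y - b) * √(1 + p ^ 2) - C / 2 * log (1 + p ^ 2)

lemma hasDerivAt_firstIntegral {b C x y' p' : ℝ} {y p : ℝ → ℝ}
    (hy : HasDerivAt y y' x) (hp : HasDerivAt p p' x) :
    HasDerivAt (fun t => firstIntegral b C (y t) (p t))
      (y' * √(1 + p x ^ 2) + (y x - b) * (p x * p' / √(1 + p x ^ 2))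
        - C * (p x * p' / (1 + p x ^ 2))) x := by
  have hpos : 0 < 1 + p x ^ 2 := by positivity
  have hq : HasDerivAt (fun t => 1 + p t ^ 2) (2 * p x * p') x := by
    simpa using (hp.pow 2).const_add 1
  unfold firstIntegral
  refine (((hy.sub_const b).mul (hq.sqrt hpos.ne')).sub
    ((hq.log hpos.ne').const_mul (C / 2))).congr_deriv ?_
  field_simp

lemma firstIntegral_deriv_eq_zero {b C y p q : ℝ} (hq : q ≠ 0)
    (h : √(1 + p ^ 2) * ((1 + p ^ 2) / q + y - b) = C) :
    p * √(1 + p ^ 2) + (y - b) * (p * q / √(1 + p ^ 2))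
      - C * (p * q / (1 + p ^ 2)) = 0 := by
  have hpos : 0 < 1 + p ^ 2 := by positivity
  have hS : 0 < √(1 + p ^ 2) := sqrt_pos.mpr hpos
  have hS2 := sq_sqrt hpos.le
  rw [← h]
  generalize √(1 + p ^ 2) = S at hS hS2 ⊢
  field_simp
  linear_combination -p * q * (y - b) * hS2

lemma eq_of_firstIntegral_eq {b C y p C₁ : ℝ} (h : firstIntegral b C y p = C₁) :
    y = b + (1 + p ^ 2) ^ (-(1 : ℝ) / 2) * (C₁ + C / 2 * log (1 + p ^ 2)) := by
  have hpos : 0 < 1 + p ^ 2 := by positivity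
  rw [neg_div, rpow_neg hpos.le, ← sqrt_eq_rpow, ← h, firstIntegral]
  field_simp
  ring

theorem stmt_2_general (btil Ctil : ℝ)
    (a b : ℝ) (f : ℝ → ℝ)
    (hf1 : ∀ u ∈ Ioo a b, DifferentiableAt ℝ f u)
    (hf2 : ∀ u ∈ Ioo a b, DifferentiableAt ℝ (deriv f) u)
    (hf'' : ∀ u ∈ Ioo a b, deriv (deriv f) u ≠ 0)
    (heq : ∀ u ∈ Ioo a b,
      Real.sqrt (1 + (deriv f u) ^ 2) *
        ((1 + (deriv f u) ^ 2) / deriv (deriv f) u + f u - btil) = Ctil) :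
    ∃ C₁ : ℝ, ∀ u ∈ Ioo a b,
      f u = btil + (1 + (deriv f u) ^ 2) ^ (-(1 : ℝ) / 2) *
        (C₁ + (Ctil / 2) * Real.log (1 + (deriv f u) ^ 2)) := by
  set g := fun u => firstIntegral btil Ctil (f u) (deriv f u)
  have hg : ∀ u ∈ Ioo a b, HasDerivAt g 0 u := fun u hu =>
    (hasDerivAt_firstIntegral (hf1 u hu).hasDerivAt (hf2 u hu).hasDerivAt).congr_deriv
      (firstIntegral_deriv_eq_zero (hf'' u hu) (heq u hu))
  obtain ⟨C₁, hC₁⟩ := isOpen_Ioo.exists_is_const_of_deriv_eq_zero isPreconnected_Ioo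
    (fun u hu => (hg u hu).differentiableAt.differentiableWithinAt)
    (fun u hu => (hg u hu).deriv)
  exact ⟨C₁, fun u hu => eq_of_firstIntegral_eq (hC₁ u hu)⟩

/-- Lemma 3.1 (first-integral form), case ã = −1. -/
theorem stmt_2 (btil Ctil : ℝ)
    (a b : ℝ) (hab : a < b) (f : ℝ → ℝ)
    (hf1 : ∀ u ∈ Ioo a b, DifferentiableAt ℝ f u)
    (hf2 : ∀ u ∈ Ioo a b, DifferentiableAt ℝ (deriv f) u)
    (hf'' : ∀ u ∈ Ioo a b, deriv (deriv f) u ≠ 0)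
    (heq : ∀ u ∈ Ioo a b,
      Real.sqrt (1 + (deriv f u) ^ 2) *
        ((1 + (deriv f u) ^ 2) / deriv (deriv f) u + f u - btil) = Ctil) :
    ∃ C₁ : ℝ, ∀ u ∈ Ioo a b,
      f u = btil + (1 + (deriv f u) ^ 2) ^ (-(1 : ℝ) / 2) *
        (C₁ + (Ctil / 2) * Real.log (1 + (deriv f u) ^ 2)) :=
  stmt_2_general btil Ctil a b f hf1 hf2 hf'' heq
end

section
/- Let ã, b̃, C̃, C̃₁ ∈ ℝ with ã ≠ 0 and ã ≠ −1, let I ⊆ ℝ be an open interval, and let f : I → ℝ be twice differentiable with f'(u) ≠ 0 for all u ∈ I, satisfying f(u) = C̃₁·(1+f'(u)²)^{ã/2} − (C̃/(ã+1))·(1+f'(u)²)^{−1/2} − b̃/ã for all u ∈ I. Then f''(u) ≠ 0 and √(1+f'(u)²)·((1+f'(u)²)/f''(u) − ã·f(u) − b̃) = C̃ for all u ∈ I. -/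
/-!
Along the curve the relation reads `f = F ∘ f'` for the explicit profile `F` of the slope
`p = f'`. Differentiating gives `f' = F'(f') f''`, and `F'(p) = p K(p)` with `K` a linear
combination of powers of `1 + p²`; cancelling `p = f' ≠ 0` yields `f'' K(f') = 1`, so `f'' ≠ 0`
and `(1 + p²)/f'' = (1 + p²) K(p)`. Substituting `f = F(p)`, the `C₁`-terms cancel and the
remaining terms collapse to `C̃ (1 + p²)^(-1/2)`, which `√(1 + p²)` turns into `C̃`.
-/

open Real Set Filter Topology

noncomputable section

def slopeProfile (a b C C₁ p : ℝ) : ℝ :=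
  C₁ * (1 + p ^ 2) ^ (a / 2) - (C / (a + 1)) * (1 + p ^ 2) ^ (-(1 : ℝ) / 2) - b / a

def slopeProfileFactor (a C C₁ p : ℝ) : ℝ :=
  C₁ * a * (1 + p ^ 2) ^ (a / 2 - 1) + C / (a + 1) * (1 + p ^ 2) ^ (-(1 : ℝ) / 2 - 1)

lemma one_add_sq_pos (p : ℝ) : 0 < 1 + p ^ 2 := by positivity

lemma hasDerivAt_one_add_sq_rpow (r p : ℝ) :
    HasDerivAt (fun x => (1 + x ^ 2) ^ r) (2 * p * r * (1 + p ^ 2) ^ (r - 1)) p := by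
  have hbase : HasDerivAt (fun x : ℝ => 1 + x ^ 2) (2 * p) p := by
    simpa using ((hasDerivAt_id p).pow 2).const_add 1
  convert hbase.rpow_const (p := r) (Or.inl (one_add_sq_pos p).ne') using 1

lemma hasDerivAt_slopeProfile (a b C C₁ p : ℝ) :
    HasDerivAt (slopeProfile a b C C₁) (p * slopeProfileFactor a C C₁ p) p := by
  have hpow := (hasDerivAt_one_add_sq_rpow (a / 2) p).const_mul C₁
  have hinv := (hasDerivAt_one_add_sq_rpow (-(1 : ℝ) / 2) p).const_mul (C / (a + 1))
  refine HasDerivAt.congr_deriv (.sub_const (b / a) (hpow.sub hinv)) ?_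
  rw [slopeProfileFactor]
  ring

lemma one_add_sq_mul_slopeProfileFactor (a C C₁ p : ℝ) :
    (1 + p ^ 2) * slopeProfileFactor a C C₁ p =
      C₁ * a * (1 + p ^ 2) ^ (a / 2) + C / (a + 1) * (1 + p ^ 2) ^ (-(1 : ℝ) / 2) := by
  have hq := (one_add_sq_pos p).ne'
  rw [slopeProfileFactor, rpow_sub_one hq, rpow_sub_one hq]
  field_simp

lemma one_add_sq_mul_slopeProfileFactor_sub_slopeProfile {a : ℝ} (ha0 : a ≠ 0)
    (ha1 : a ≠ -1) (b C C₁ p : ℝ) :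
    (1 + p ^ 2) * slopeProfileFactor a C C₁ p - a * slopeProfile a b C C₁ p - b =
      C * (1 + p ^ 2) ^ (-(1 : ℝ) / 2) := by
  have ha1' : a + 1 ≠ 0 := fun h => ha1 (eq_neg_of_add_eq_zero_left h)
  rw [one_add_sq_mul_slopeProfileFactor, slopeProfile]
  field_simp
  ring

lemma sqrt_mul_rpow_neg_half {x : ℝ} (hx : 0 < x) : √x * x ^ (-(1 : ℝ) / 2) = 1 := by
  rw [sqrt_eq_rpow, ← rpow_add hx]
  norm_num

lemma deriv_deriv_mul_eq_one_of_eventuallyEq_comp_deriv {f F : ℝ → ℝ} {u K : ℝ}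
    (hrel : f =ᶠ[𝓝 u] F ∘ deriv f) (hF : HasDerivAt F (deriv f u * K) (deriv f u))
    (hf2 : DifferentiableAt ℝ (deriv f) u) (hf' : deriv f u ≠ 0) :
    deriv (deriv f) u * K = 1 := by
  have hchain : deriv f u = deriv f u * K * deriv (deriv f) u :=
    hrel.deriv_eq.trans (hF.comp u hf2.hasDerivAt).deriv
  apply mul_left_cancel₀ hf'
  linear_combination -hchain

theorem stmt_3_general (atil btil Ctil C₁ : ℝ) (ha0 : atil ≠ 0) (ha1 : atil ≠ -1)
    (a b : ℝ) (f : ℝ → ℝ)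
    (hf2 : ∀ u ∈ Ioo a b, DifferentiableAt ℝ (deriv f) u)
    (hf' : ∀ u ∈ Ioo a b, deriv f u ≠ 0)
    (heq : ∀ u ∈ Ioo a b,
      f u = C₁ * (1 + (deriv f u) ^ 2) ^ (atil / 2)
        - (Ctil / (atil + 1)) * (1 + (deriv f u) ^ 2) ^ (-(1 : ℝ) / 2)
        - btil / atil) :
    ∀ u ∈ Ioo a b,
      deriv (deriv f) u ≠ 0 ∧
      Real.sqrt (1 + (deriv f u) ^ 2) *
        ((1 + (deriv f u) ^ 2) / deriv (deriv f) u - atil * f u - btil) = Ctil := by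
  intro u hu
  have hrel : f =ᶠ[𝓝 u] slopeProfile atil btil Ctil C₁ ∘ deriv f :=
    eventually_of_mem (isOpen_Ioo.mem_nhds hu) heq
  have hK := deriv_deriv_mul_eq_one_of_eventuallyEq_comp_deriv hrel
    (hasDerivAt_slopeProfile atil btil Ctil C₁ (deriv f u)) (hf2 u hu) (hf' u hu)
  have hf'' : deriv (deriv f) u ≠ 0 := left_ne_zero_of_mul_eq_one hK
  refine ⟨hf'', ?_⟩
  have hdiv : (1 + deriv f u ^ 2) / deriv (deriv f) u =
      (1 + deriv f u ^ 2) * slopeProfileFactor atil Ctil C₁ (deriv f u) := by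
    rw [div_eq_iff hf'', mul_assoc, mul_comm _ (deriv (deriv f) u), hK, mul_one]
  rw [hdiv, show f u = slopeProfile atil btil Ctil C₁ (deriv f u) from heq u hu,
    one_add_sq_mul_slopeProfileFactor_sub_slopeProfile ha0 ha1, mul_left_comm,
    sqrt_mul_rpow_neg_half (one_add_sq_pos _), mul_one]

/-- Lemma 3.1, converse direction, case ã ∉ {−1, 0}: the explicit solutions
satisfy the original ODE in first-integral form. -/
theorem stmt_3 (atil btil Ctil C₁ : ℝ) (ha0 : atil ≠ 0) (ha1 : atil ≠ -1)
    (a b : ℝ) (f : ℝ → ℝ)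
    (hf1 : ∀ u ∈ Ioo a b, DifferentiableAt ℝ f u)
    (hf2 : ∀ u ∈ Ioo a b, DifferentiableAt ℝ (deriv f) u)
    (hf' : ∀ u ∈ Ioo a b, deriv f u ≠ 0)
    (heq : ∀ u ∈ Ioo a b,
      f u = C₁ * (1 + (deriv f u) ^ 2) ^ (atil / 2)
        - (Ctil / (atil + 1)) * (1 + (deriv f u) ^ 2) ^ (-(1 : ℝ) / 2)
        - btil / atil) :
    ∀ u ∈ Ioo a b,
      deriv (deriv f) u ≠ 0 ∧
      Real.sqrt (1 + (deriv f u) ^ 2) *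
        ((1 + (deriv f u) ^ 2) / deriv (deriv f) u - atil * f u - btil) = Ctil :=
  stmt_3_general atil btil Ctil C₁ ha0 ha1 a b f hf2 hf' heq

end
end

section
/- Let U ⊆ ℂ be a nonempty open preconnected set, let b, c ∈ ℝ, and let f, g : ℂ → ℂ be analytic on U such that g'(z) ≠ 0 and f(z) + b + i·c ≠ 0 for all z ∈ U, and such that g'(z)·(f'(z))² = (f(z)+b+i·c)·(g'(z)·f''(z) − g''(z)·f'(z)) for all z ∈ U. Then there exist constants z₁, z₂ ∈ ℂ such that f(z) = z₁·exp(z₂·g(z)) − b − i·c for all z ∈ U. -/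
open Complex

/-! The differential equation says precisely that `F' / (g' F)` has zero derivative, so that
`F' = a g' F` for a constant `a`; then `F · exp (-a g)` has zero derivative, hence is constant,
and `F = f + b + c i` is a constant multiple of `exp (a g)`. -/

theorem IsOpen.exists_eq_mul_exp_of_deriv_eq {U : Set ℂ} (hU : IsOpen U)
    (hUconn : IsPreconnected U) {F g : ℂ → ℂ} (hF : DifferentiableOn ℂ F U)
    (hg : DifferentiableOn ℂ g U) (a : ℂ) (hFg : ∀ z ∈ U, deriv F z = a * deriv g z * F z) :
    ∃ C : ℂ, ∀ z ∈ U, F z = C * exp (a * g z) := by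
  set φ : ℂ → ℂ := fun z => F z * exp (-(a * g z))
  have hφ : DifferentiableOn ℂ φ U :=
    hF.mul ((hg.const_mul a).neg.cexp)
  have hφ' : U.EqOn (deriv φ) 0 := by
    intro z hz
    have hFz := (hF.differentiableAt (hU.mem_nhds hz)).hasDerivAt
    have hgz := (hg.differentiableAt (hU.mem_nhds hz)).hasDerivAt
    have hφz : HasDerivAt φ _ z := hFz.mul ((hgz.const_mul a).neg.cexp)
    rw [hφz.deriv, hFg z hz, Pi.neg_apply, Pi.zero_apply]
    ring
  obtain ⟨C, hC⟩ := hU.exists_is_const_of_deriv_eq_zero hUconn hφ hφ'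
  refine ⟨C, fun z hz => ?_⟩
  rw [← hC z hz, mul_assoc, ← exp_add, neg_add_cancel, exp_zero, mul_one]

theorem IsOpen.exists_deriv_eq_mul_deriv_mul_of_sq_deriv_eq {U : Set ℂ} (hU : IsOpen U)
    (hUconn : IsPreconnected U) {F g : ℂ → ℂ} (hF : AnalyticOnNhd ℂ F U)
    (hg : AnalyticOnNhd ℂ g U) (hg' : ∀ z ∈ U, deriv g z ≠ 0) (hF0 : ∀ z ∈ U, F z ≠ 0)
    (hode : ∀ z ∈ U, deriv g z * deriv F z ^ 2 =
      F z * (deriv g z * deriv (deriv F) z - deriv (deriv g) z * deriv F z)) :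
    ∃ a : ℂ, ∀ z ∈ U, deriv F z = a * deriv g z * F z := by
  have hden : ∀ z ∈ U, F z * deriv g z ≠ 0 := fun z hz => mul_ne_zero (hF0 z hz) (hg' z hz)
  set h : ℂ → ℂ := fun z => deriv F z / (F z * deriv g z)
  have hh : DifferentiableOn ℂ h U :=
    (hF.deriv.differentiableOn).div (hF.mul hg.deriv).differentiableOn hden
  have hh' : U.EqOn (deriv h) 0 := by
    intro z hz
    have hFz := (hF z hz).differentiableAt.hasDerivAt
    have hF'z := (hF.deriv z hz).differentiableAt.hasDerivAt
    have hg'z := (hg.deriv z hz).differentiableAt.hasDerivAt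
    have hhz : HasDerivAt h _ z := hF'z.div (hFz.mul hg'z) (hden z hz)
    rw [hhz.deriv, Pi.zero_apply, div_eq_zero_iff]
    left
    linear_combination -hode z hz
  obtain ⟨a, ha⟩ := hU.exists_is_const_of_deriv_eq_zero hUconn hh hh'
  refine ⟨a, fun z hz => ?_⟩
  have := ha z hz
  rw [div_eq_iff (hden z hz)] at this
  rw [this]
  ring

theorem stmt_12_general (U : Set ℂ) (hU : IsOpen U)
    (hUconn : IsPreconnected U) (b c : ℝ) (f g : ℂ → ℂ)
    (hf : AnalyticOnNhd ℂ f U) (hg : AnalyticOnNhd ℂ g U)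
    (hg' : ∀ z ∈ U, deriv g z ≠ 0)
    (hfne : ∀ z ∈ U, f z + (b : ℂ) + (c : ℂ) * Complex.I ≠ 0)
    (hode : ∀ z ∈ U,
      deriv g z * (deriv f z) ^ 2 =
        (f z + (b : ℂ) + (c : ℂ) * Complex.I) *
          (deriv g z * deriv (deriv f) z - deriv (deriv g) z * deriv f z)) :
    ∃ z₁ z₂ : ℂ, ∀ z ∈ U,
      f z = z₁ * Complex.exp (z₂ * g z) - (b : ℂ) - (c : ℂ) * Complex.I := by
  set F : ℂ → ℂ := fun z => f z + ((b : ℂ) + (c : ℂ) * Complex.I)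
  have hF : AnalyticOnNhd ℂ F U := hf.add analyticOnNhd_const
  have hderivF : deriv F = deriv f := funext fun z => deriv_add_const _
  obtain ⟨a, ha⟩ := hU.exists_deriv_eq_mul_deriv_mul_of_sq_deriv_eq hUconn hF hg hg'
    (fun z hz => by simpa only [F, ← add_assoc] using hfne z hz)
    (fun z hz => by rw [hderivF]; simpa only [F, ← add_assoc] using hode z hz)
  obtain ⟨C, hC⟩ := hU.exists_eq_mul_exp_of_deriv_eq hUconn hF.differentiableOn
    hg.differentiableOn a ha
  exact ⟨C, a, fun z hz => by linear_combination hC z hz⟩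

/-- Lemma 3.3, case a = 1. -/
theorem stmt_12 (U : Set ℂ) (hU : IsOpen U) (hUne : U.Nonempty)
    (hUconn : IsPreconnected U) (b c : ℝ) (f g : ℂ → ℂ)
    (hf : AnalyticOnNhd ℂ f U) (hg : AnalyticOnNhd ℂ g U)
    (hg' : ∀ z ∈ U, deriv g z ≠ 0)
    (hfne : ∀ z ∈ U, f z + (b : ℂ) + (c : ℂ) * Complex.I ≠ 0)
    (hode : ∀ z ∈ U,
      deriv g z * (deriv f z) ^ 2 =
        (f z + (b : ℂ) + (c : ℂ) * Complex.I) *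
          (deriv g z * deriv (deriv f) z - deriv (deriv g) z * deriv f z)) :
    ∃ z₁ z₂ : ℂ, ∀ z ∈ U,
      f z = z₁ * Complex.exp (z₂ * g z) - (b : ℂ) - (c : ℂ) * Complex.I :=
  stmt_12_general U hU hUconn b c f g hf hg hg' hfne hode
end

section
/- Let U ⊆ ℂ be a nonempty open preconnected set, let b, c ∈ ℝ with (b,c) ≠ (0,0), and let f, g : ℂ → ℂ be analytic on U such that g'(z) ≠ 0 for all z ∈ U, and such that g'(z)·(f'(z))² = (b+i·c)·(g'(z)·f''(z) − g''(z)·f'(z)) for all z ∈ U. Then there exist constants z₁, z₂ ∈ ℂ such that exp(−f(z)/(b+i·c)) = z₁·g(z) + z₂ for all z ∈ U. -/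
/-!
Put `κ = b + i c` and `F = exp (-f / κ)`, so that `F' = -F f' / κ`. The equation says exactly
that `F f' / g'` has zero derivative, hence is a constant `a` on the connected set `U`. Then
`F' = (-a / κ) g'`, and integrating once more gives `F = (-a / κ) g + z₂`.
-/

open Complex

section FirstIntegral

variable {f g : ℂ → ℂ} {κ z : ℂ}

lemma hasDerivAt_cexp_neg_div (hf : DifferentiableAt ℂ f z) :
    HasDerivAt (fun w => exp (-f w / κ)) (exp (-f z / κ) * (-deriv f z / κ)) z :=
  (hf.hasDerivAt.neg.div_const κ).cexp

lemma deriv_cexp_neg_div_mul_deriv_div_deriv_eq_zero (hκ : κ ≠ 0)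
    (hf : DifferentiableAt ℂ f z) (hf' : DifferentiableAt ℂ (deriv f) z)
    (hg' : DifferentiableAt ℂ (deriv g) z) (hg0 : deriv g z ≠ 0)
    (hode : deriv g z * deriv f z ^ 2 =
      κ * (deriv g z * deriv (deriv f) z - deriv (deriv g) z * deriv f z)) :
    deriv (fun w => exp (-f w / κ) * deriv f w / deriv g w) z = 0 := by
  rw [(((hasDerivAt_cexp_neg_div hf).fun_mul hf'.hasDerivAt).fun_div hg'.hasDerivAt hg0).deriv]
  generalize exp (-f z / κ) = E
  field_simp
  linear_combination -E * hode

theorem IsOpen.exists_cexp_neg_div_eq_mul_add {U : Set ℂ} (hU : IsOpen U)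
    (hUc : IsPreconnected U) (hκ : κ ≠ 0)
    (hf : DifferentiableOn ℂ f U) (hf' : DifferentiableOn ℂ (deriv f) U)
    (hg : DifferentiableOn ℂ g U) (hg' : DifferentiableOn ℂ (deriv g) U)
    (hg0 : ∀ z ∈ U, deriv g z ≠ 0)
    (hode : ∀ z ∈ U, deriv g z * deriv f z ^ 2 =
      κ * (deriv g z * deriv (deriv f) z - deriv (deriv g) z * deriv f z)) :
    ∃ z₁ z₂ : ℂ, ∀ z ∈ U, exp (-f z / κ) = z₁ * g z + z₂ := by
  have hAt {φ : ℂ → ℂ} (hφ : DifferentiableOn ℂ φ U) {z : ℂ} (hz : z ∈ U) :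
      DifferentiableAt ℂ φ z :=
    hφ.differentiableAt (hU.mem_nhds hz)
  have hF : DifferentiableOn ℂ (fun w => exp (-f w / κ)) U := (hf.neg.div_const κ).cexp
  obtain ⟨a, ha⟩ := hU.exists_is_const_of_deriv_eq_zero hUc
    ((hF.fun_mul hf').fun_div hg' hg0) fun z hz =>
      deriv_cexp_neg_div_mul_deriv_div_deriv_eq_zero hκ (hAt hf hz) (hAt hf' hz) (hAt hg' hz)
        (hg0 z hz) (hode z hz)
  obtain ⟨z₂, hz₂⟩ := hU.exists_eq_add_of_deriv_eq hUc hF (hg.const_mul (-a / κ)) fun z hz => by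
    rw [(hasDerivAt_cexp_neg_div (hAt hf hz)).deriv, deriv_const_mul _ (hAt hg hz), ← ha z hz]
    field_simp [hg0 z hz]
  exact ⟨-a / κ, z₂, hz₂⟩

end FirstIntegral

theorem stmt_13_general (U : Set ℂ) (hU : IsOpen U)
    (hUconn : IsPreconnected U) (b c : ℝ) (hbc : (b, c) ≠ (0, 0)) (f g : ℂ → ℂ)
    (hf : AnalyticOnNhd ℂ f U) (hg : AnalyticOnNhd ℂ g U)
    (hg' : ∀ z ∈ U, deriv g z ≠ 0)
    (hode : ∀ z ∈ U,
      deriv g z * (deriv f z) ^ 2 =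
        ((b : ℂ) + (c : ℂ) * Complex.I) *
          (deriv g z * deriv (deriv f) z - deriv (deriv g) z * deriv f z)) :
    ∃ z₁ z₂ : ℂ, ∀ z ∈ U,
      Complex.exp (-f z / ((b : ℂ) + (c : ℂ) * Complex.I)) = z₁ * g z + z₂ := by
  have hκ : (b : ℂ) + c * I ≠ 0 := fun h => hbc <| by simpa [Complex.ext_iff] using h
  exact hU.exists_cexp_neg_div_eq_mul_add hUconn hκ hf.differentiableOn
    hf.deriv.differentiableOn hg.differentiableOn hg.deriv.differentiableOn hg' hode

/-- Lemma 3.3, case a = 0, in branch-free form. -/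
theorem stmt_13 (U : Set ℂ) (hU : IsOpen U) (hUne : U.Nonempty)
    (hUconn : IsPreconnected U) (b c : ℝ) (hbc : (b, c) ≠ (0, 0)) (f g : ℂ → ℂ)
    (hf : AnalyticOnNhd ℂ f U) (hg : AnalyticOnNhd ℂ g U)
    (hg' : ∀ z ∈ U, deriv g z ≠ 0)
    (hode : ∀ z ∈ U,
      deriv g z * (deriv f z) ^ 2 =
        ((b : ℂ) + (c : ℂ) * Complex.I) *
          (deriv g z * deriv (deriv f) z - deriv (deriv g) z * deriv f z)) :
    ∃ z₁ z₂ : ℂ, ∀ z ∈ U,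
      Complex.exp (-f z / ((b : ℂ) + (c : ℂ) * Complex.I)) = z₁ * g z + z₂ :=
  stmt_13_general U hU hUconn b c hbc f g hf hg hg' hode
end

section
/- Let n ≥ 3 be an integer, C ∈ ℝ, let I ⊆ ℝ be a nonempty open interval, and let h : I → ℝ be twice differentiable satisfying (n−1)·h''(u)·(h(u)−C) = 1 + h'(u)² for all u ∈ I. Then there exists a constant C₁ ∈ ℝ with C₁ ≠ 0 such that h(u) − C = C₁·(1+h'(u)²)^{(n−1)/2} for all u ∈ I. -/
open Real Set

/-- The profile ODE of Theorem 2.1 and its first integral. -/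
theorem stmt_16 (n : ℕ) (hn : 3 ≤ n) (C : ℝ)
    (a b : ℝ) (hab : a < b) (h : ℝ → ℝ)
    (hh1 : ∀ u ∈ Ioo a b, DifferentiableAt ℝ h u)
    (hh2 : ∀ u ∈ Ioo a b, DifferentiableAt ℝ (deriv h) u)
    (hode : ∀ u ∈ Ioo a b,
      ((n : ℝ) - 1) * deriv (deriv h) u * (h u - C) = 1 + (deriv h u) ^ 2) :
    ∃ C₁ : ℝ, C₁ ≠ 0 ∧ ∀ u ∈ Ioo a b,
      h u - C = C₁ * (1 + (deriv h u) ^ 2) ^ (((n : ℝ) - 1) / 2) := by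
  set k : ℝ := ((n : ℝ) - 1) / 2 with hk
  have h2k : 2 * k = (n : ℝ) - 1 := by rw [hk]; ring
  set F : ℝ → ℝ := fun u => (h u - C) * (1 + (deriv h u) ^ 2) ^ (-k) with hF
  have hp_pos : ∀ u : ℝ, (0 : ℝ) < 1 + (deriv h u) ^ 2 := fun u => by positivity
  -- F has derivative 0 on Ioo a b
  have hFderiv : ∀ u ∈ Ioo a b, HasDerivAt F 0 u := by
    intro u hu
    have hp : HasDerivAt (fun v => 1 + (deriv h v) ^ 2)
        (2 * deriv h u * deriv (deriv h) u) u := by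
      have := ((hh2 u hu).hasDerivAt.pow 2).const_add 1
      refine this.congr_deriv ?_
      simp [mul_comm, mul_assoc, mul_left_comm]
    have hrp : HasDerivAt (fun v => (1 + (deriv h v) ^ 2) ^ (-k))
        ((2 * deriv h u * deriv (deriv h) u) * (-k) * (1 + (deriv h u) ^ 2) ^ (-k - 1)) u :=
      hp.rpow_const (Or.inl (ne_of_gt (hp_pos u)))
    have hhC : HasDerivAt (fun v => h v - C) (deriv h u) u :=
      ((hh1 u hu).hasDerivAt).sub_const C
    have hmul := hhC.mul hrp
    refine HasDerivAt.congr_deriv (f := F) hmul ?_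
    have hode' := hode u hu
    set p := 1 + (deriv h u) ^ 2 with hpdef
    have hpne : p ≠ 0 := ne_of_gt (hp_pos u)
    have hpow : p ^ (-k - 1) * p = p ^ (-k) := by
      rw [← Real.rpow_add_one hpne]; norm_num
    have key : (h u - C) * deriv (deriv h) u * (2 * k) = p := by
      rw [h2k]; linarith [hode']
    have key2 : (h u - C) * (2 * deriv h u * deriv (deriv h) u * -k * p ^ (-k - 1))
        = -(deriv h u * p ^ (-k)) := by
      have e1 : (h u - C) * (2 * deriv h u * deriv (deriv h) u * -k * p ^ (-k - 1))
          = -(deriv h u) * (((h u - C) * deriv (deriv h) u * (2 * k)) * p ^ (-k - 1)) := by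
        ring
      rw [e1, key, ← hpow]; ring
    rw [key2]; ring
  -- F is constant on Ioo a b
  have u₀ : ℝ := (a + b) / 2
  have hu₀ : (a + b) / 2 ∈ Ioo a b := ⟨by linarith, by linarith⟩
  have hconst : ∀ u ∈ Ioo a b, F u = F ((a + b) / 2) := by
    intro u hu
    have hconv : Convex ℝ (Ioo a b) := convex_Ioo a b
    have hdiff : DifferentiableOn ℝ F (Ioo a b) := fun x hx =>
      (hFderiv x hx).differentiableAt.differentiableWithinAt
    refine hconv.is_const_of_fderivWithin_eq_zero hdiff (fun x hx => ?_) hu hu₀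
    have : fderivWithin ℝ F (Ioo a b) x = fderiv ℝ F x :=
      fderivWithin_of_isOpen isOpen_Ioo hx
    rw [this]
    have : deriv F x = 0 := (hFderiv x hx).deriv
    ext y
    simp [← toSpanSingleton_deriv, this]
  -- C₁ := F u₀ ≠ 0
  refine ⟨F ((a + b) / 2), ?_, ?_⟩
  · have hode' := hode _ hu₀
    have hne : h ((a + b) / 2) - C ≠ 0 := by
      intro h0
      rw [h0, mul_zero] at hode'
      nlinarith [sq_nonneg (deriv h ((a + b) / 2)), hode'.symm]
    exact mul_ne_zero hne (ne_of_gt (Real.rpow_pos_of_pos (hp_pos _) _))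
  · intro u hu
    have := hconst u hu
    have hpk : (1 + (deriv h u) ^ 2) ^ (-k) * (1 + (deriv h u) ^ 2) ^ k = 1 := by
      rw [← Real.rpow_add (hp_pos u)]; simp
    calc h u - C = (h u - C) * ((1 + (deriv h u) ^ 2) ^ (-k) * (1 + (deriv h u) ^ 2) ^ k) := by
          rw [hpk, mul_one]
      _ = F u * (1 + (deriv h u) ^ 2) ^ k := by rw [hF]; ring
      _ = F ((a + b) / 2) * (1 + (deriv h u) ^ 2) ^ k := by rw [this]
end
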